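/- Let κ be a positive definite kernel on a locally compact Hausdorff space X, A an (m,p)-condenser, g : X → (0,∞) continuous, and a = (a_i)_{i∈I} with a_i > 0. Then ‖E(A,a,g)‖² = ‖E⁰(A,a,g)‖²; that is, cap(A,a,g) is unchanged if in its definition the class E(A,a,g) is replaced by the subclass E⁰(A,a,g) of measures with compactly supported coordinates. -/

import Mathlib

open MeasureTheory Filter Topology Set ENNReal NNReal

noncomputable section

namespace Zorii

variable {X : Type} [TopologicalSpace X] [MeasurableSpace X]

/-- A nonnegative Radon measure: inner regular and finite on compacts. -/
def IsRadon (μ : Measure X) : Prop :=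
  μ.InnerRegular ∧ IsFiniteMeasureOnCompacts μ

/-- `μ` is concentrated on `E`. -/
def ConcOn (μ : Measure X) (E : Set X) : Prop := μ Eᶜ = 0

/-- A kernel is a lower semicontinuous function on `X × X`. -/
def IsKernel (κ : X → X → ℝ≥0∞) : Prop :=
  LowerSemicontinuous (Function.uncurry κ)

/-- Mutual energy of two nonnegative measures. -/
def mutualE (κ : X → X → ℝ≥0∞) (μ ν : Measure X) : ℝ≥0∞ :=
  ∫⁻ x, ∫⁻ y, κ x y ∂ν ∂μ

/-- A signed Radon measure is represented by an ordered pair (positive part, negative part). -/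
def IsRadonPair (P : Measure X × Measure X) : Prop := IsRadon P.1 ∧ IsRadon P.2

/-- Finiteness of the energy of a signed measure, componentwise. -/
def FinEnergy (κ : X → X → ℝ≥0∞) (P : Measure X × Measure X) : Prop :=
  mutualE κ P.1 P.1 < ⊤ ∧ mutualE κ P.2 P.2 < ⊤ ∧
    mutualE κ P.1 P.2 < ⊤ ∧ mutualE κ P.2 P.1 < ⊤

/-- Membership in the pre-Hilbert space `E` of (signed) Radon measures of finite energy. -/
def inE (κ : X → X → ℝ≥0∞) (P : Measure X × Measure X) : Prop :=
  IsRadonPair P ∧ FinEnergy κ P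

/-- The energy scalar product of two signed measures of finite energy. -/
def eInner (κ : X → X → ℝ≥0∞) (P Q : Measure X × Measure X) : ℝ :=
  (mutualE κ P.1 Q.1 + mutualE κ P.2 Q.2).toReal -
    (mutualE κ P.1 Q.2 + mutualE κ P.2 Q.1).toReal

/-- The energy (squared seminorm) of a signed measure. -/
def normSq (κ : X → X → ℝ≥0∞) (P : Measure X × Measure X) : ℝ := eInner κ P P

/-- Difference of two signed measures (as pairs). -/
def pairSub (P Q : Measure X × Measure X) : Measure X × Measure X :=
  (P.1 + Q.2, P.2 + Q.1)

/-- `‖P - Q‖²`. -/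
def dist2 (κ : X → X → ℝ≥0∞) (P Q : Measure X × Measure X) : ℝ :=
  normSq κ (pairSub P Q)

/-- A positive definite kernel: symmetric, with nonnegative energies. -/
def PositiveDefinite (κ : X → X → ℝ≥0∞) : Prop :=
  (∀ x y, κ x y = κ y x) ∧
    ∀ P : Measure X × Measure X, IsRadonPair P → FinEnergy κ P → 0 ≤ normSq κ P

/-- A strictly positive definite kernel: the energy seminorm is a norm. -/
def StrictlyPositiveDefinite (κ : X → X → ℝ≥0∞) : Prop :=
  PositiveDefinite κ ∧ ∀ P, inE κ P → normSq κ P = 0 → P.1 = P.2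

/-- Potential of a nonnegative measure. -/
def potOf (κ : X → X → ℝ≥0∞) (ν : Measure X) (x : X) : ℝ≥0∞ := ∫⁻ y, κ x y ∂ν

/-- Potential of a signed measure, with values in the extended reals. -/
def pot (κ : X → X → ℝ≥0∞) (P : Measure X × Measure X) (x : X) : EReal :=
  (potOf κ P.1 x : EReal) - (potOf κ P.2 x : EReal)

/-- The interior capacity of a set `E ⊆ X`. -/
def setCap (κ : X → X → ℝ≥0∞) (E : Set X) : ℝ≥0∞ :=
  (⨅ (ν : Measure X) (_ : IsRadon ν ∧ ConcOn ν E ∧ ν Set.univ = 1), mutualE κ ν ν)⁻¹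

/-- `Q` holds nearly everywhere (n.e.) in `E`. -/
def NearlyEverywhereOn (κ : X → X → ℝ≥0∞) (Q : X → Prop) (E : Set X) : Prop :=
  setCap κ {x | x ∈ E ∧ ¬ Q x} = 0

/-- The "inf" of a function over `E`, understood nearly everywhere. -/
def nearInf (κ : X → X → ℝ≥0∞) (f : X → EReal) (E : Set X) : EReal :=
  sSup ((fun q : ℝ => (q : EReal)) ''
    {q : ℝ | NearlyEverywhereOn κ (fun x => (q : EReal) ≤ f x) E})

/-- The support of a measure. -/
def msupport (μ : Measure X) : Set X :=
  {x | ∀ U : Set X, IsOpen U → x ∈ U → μ U ≠ 0}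

/-- The vague topology on measures: the coarsest topology making
`ν ↦ ∫ f dν` continuous for all continuous compactly supported `f`. -/
def vagueTop (X : Type) [TopologicalSpace X] [MeasurableSpace X] :
    TopologicalSpace (Measure X) :=
  ⨅ (f : X → ℝ) (_ : Continuous f ∧ HasCompactSupport f),
    TopologicalSpace.induced (fun ν : Measure X => ∫ x, f x ∂ν) inferInstance

/-- The `A`-vague topology: coordinatewise vague topology. -/
def avagueTop (X : Type) [TopologicalSpace X] [MeasurableSpace X] (k : ℕ) :
    TopologicalSpace (Fin k → Measure X) :=
  @Pi.topologicalSpace (Fin k) (fun _ => Measure X) (fun _ => vagueTop X)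

/-- A net in `Y`: a map from a nonempty directed preordered index type. -/
structure Net (Y : Type) where
  ι : Type
  pre : Preorder ι
  ne : Nonempty ι
  dir : IsDirected ι (fun a b => pre.toLE.le a b)
  toFun : ι → Y

/-- The `atTop` filter of a net's index. -/
def Net.atTopF {Y : Type} (n : Net Y) : Filter n.ι := @Filter.atTop n.ι n.pre

/-- The order relation of a net's index. -/
def Net.leRel {Y : Type} (n : Net Y) (s t : n.ι) : Prop := @LE.le n.ι n.pre.toLE s t

/-- Sign of the index `i`: `+1` for the first `m` indices, `-1` otherwise. -/
def sgn (m : ℕ) {k : ℕ} (i : Fin k) : ℝ := if (i : ℕ) < m then 1 else -1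

/-- An `(m,p)`-condenser. -/
structure Condenser (X : Type) [TopologicalSpace X] (m p : ℕ) where
  plate : Fin (m + p) → Set X
  plate_nonempty : ∀ i, (plate i).Nonempty
  separated : ∀ i j : Fin (m + p), (i : ℕ) < m → ¬ ((j : ℕ) < m) →
    closure (plate i) ∩ closure (plate j) = ∅

variable {m p : ℕ}

/-- The closure of a condenser. -/
def Condenser.cl (A : Condenser X m p) : Condenser X m p where
  plate i := closure (A.plate i)
  plate_nonempty i := (A.plate_nonempty i).closure
  separated i j hi hj := by simpa [closure_closure] using A.separated i j hi hj

/-- `B ≺ A` : plates are contained one in another. -/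
def Condenser.prec (B A : Condenser X m p) : Prop := ∀ i, B.plate i ⊆ A.plate i

def Condenser.unionAll (A : Condenser X m p) : Set X := ⋃ i, A.plate i

def Condenser.posUnion (A : Condenser X m p) : Set X :=
  ⋃ i ∈ {i : Fin (m + p) | (i : ℕ) < m}, A.plate i

def Condenser.negUnion (A : Condenser X m p) : Set X :=
  ⋃ i ∈ {i : Fin (m + p) | ¬ (i : ℕ) < m}, A.plate i

/-- A measure associated with the condenser `A`: an `I`-tuple of nonnegative Radon
measures, the `i`-th one concentrated on the plate `A_i`. -/
def Assoc (A : Condenser X m p) (μ : Fin (m + p) → Measure X) : Prop :=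
  ∀ i, IsRadon (μ i) ∧ ConcOn (μ i) (A.plate i)

def Rpos (m p : ℕ) (μ : Fin (m + p) → Measure X) : Measure X :=
  ∑ i ∈ Finset.univ.filter (fun i : Fin (m + p) => (i : ℕ) < m), μ i

def Rneg (m p : ℕ) (μ : Fin (m + p) → Measure X) : Measure X :=
  ∑ i ∈ Finset.univ.filter (fun i : Fin (m + p) => ¬ (i : ℕ) < m), μ i

/-- The `R`-image of an associated measure (its positive and negative parts). -/
def Rpair (m p : ℕ) (μ : Fin (m + p) → Measure X) : Measure X × Measure X :=
  (Rpos m p μ, Rneg m p μ)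

/-- `E(A)`: associated measures of finite energy. -/
def inEA (κ : X → X → ℝ≥0∞) (A : Condenser X m p) (μ : Fin (m + p) → Measure X) : Prop :=
  Assoc A μ ∧ FinEnergy κ (Rpair m p μ)

def gInt (g : X → ℝ) (ν : Measure X) : ℝ≥0∞ := ∫⁻ x, ENNReal.ofReal (g x) ∂ν

/-- `E(A,b,g)` with prescribed `g`-masses `b i`. -/
def inEAb (κ : X → X → ℝ≥0∞) (A : Condenser X m p) (b : Fin (m + p) → ℝ≥0∞)
    (g : X → ℝ) (μ : Fin (m + p) → Measure X) : Prop :=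
  inEA κ A μ ∧ ∀ i, gInt g (μ i) = b i

/-- `E(A,≤b,g)`. -/
def inEAble (κ : X → X → ℝ≥0∞) (A : Condenser X m p) (b : Fin (m + p) → ℝ≥0∞)
    (g : X → ℝ) (μ : Fin (m + p) → Measure X) : Prop :=
  inEA κ A μ ∧ ∀ i, gInt g (μ i) ≤ b i

/-- `E⁰(A,b,g)`: members of `E(A,b,g)` whose coordinates are compactly supported
inside the respective plates. -/
def inE0b (κ : X → X → ℝ≥0∞) (A : Condenser X m p) (b : Fin (m + p) → ℝ≥0∞)
    (g : X → ℝ) (μ : Fin (m + p) → Measure X) : Prop :=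
  inEAb κ A b g μ ∧ ∀ i, ∃ K : Set X, IsCompact K ∧ K ⊆ A.plate i ∧ ConcOn (μ i) K

def assocNormSq (κ : X → X → ℝ≥0∞) (m p : ℕ) (μ : Fin (m + p) → Measure X) : ℝ :=
  normSq κ (Rpair m p μ)

def sdist2 (κ : X → X → ℝ≥0∞) (m p : ℕ) (μ ν : Fin (m + p) → Measure X) : ℝ :=
  dist2 κ (Rpair m p μ) (Rpair m p ν)

/-- The mutual energy `κ(μ^i, μ)` of the `i`-th coordinate with the whole measure. -/
def coordE (κ : X → X → ℝ≥0∞) (m p : ℕ) (μ : Fin (m + p) → Measure X) (i : Fin (m + p)) : ℝ :=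
  eInner κ (μ i, 0) (Rpair m p μ)

def aVec {k : ℕ} (a : Fin k → ℝ) : Fin k → ℝ≥0∞ := fun i => ENNReal.ofReal (a i)

/-- `‖E(A,b,g)‖²`. -/
def minE (κ : X → X → ℝ≥0∞) (A : Condenser X m p) (b : Fin (m + p) → ℝ≥0∞)
    (g : X → ℝ) : ℝ≥0∞ :=
  ⨅ (μ : Fin (m + p) → Measure X) (_ : inEAb κ A b g μ), ENNReal.ofReal (assocNormSq κ m p μ)

/-- `‖E⁰(A,b,g)‖²`. -/
def minE0 (κ : X → X → ℝ≥0∞) (A : Condenser X m p) (b : Fin (m + p) → ℝ≥0∞)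
    (g : X → ℝ) : ℝ≥0∞ :=
  ⨅ (μ : Fin (m + p) → Measure X) (_ : inE0b κ A b g μ), ENNReal.ofReal (assocNormSq κ m p μ)

/-- The interior capacity of the condenser `A`. -/
def cap (κ : X → X → ℝ≥0∞) (A : Condenser X m p) (a : Fin (m + p) → ℝ) (g : X → ℝ) : ℝ≥0∞ :=
  (minE κ A (aVec a) g)⁻¹

/-- The vector `a · cap(A,a,g)`. -/
def aCap (κ : X → X → ℝ≥0∞) (A : Condenser X m p) (a : Fin (m + p) → ℝ) (g : X → ℝ) :
    Fin (m + p) → ℝ≥0∞ :=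
  fun i => ENNReal.ofReal (a i) * cap κ A a g

def AVagueTendstoF {ι : Type} {k : ℕ} (F : Filter ι) (μs : ι → (Fin k → Measure X))
    (μ : Fin k → Measure X) : Prop :=
  @Filter.Tendsto ι (Fin k → Measure X) μs F (@nhds _ (avagueTop X k) μ)

def AVagueClusterPtF {ι : Type} {k : ℕ} (F : Filter ι) (μs : ι → (Fin k → Measure X))
    (μ : Fin k → Measure X) : Prop :=
  @MapClusterPt (Fin k → Measure X) (avagueTop X k) ι μ F μs

def StrongTendstoF (κ : X → X → ℝ≥0∞) (m p : ℕ) {ι : Type} (F : Filter ι)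
    (μs : ι → (Fin (m + p) → Measure X)) (χ : Fin (m + p) → Measure X) : Prop :=
  Tendsto (fun s => sdist2 κ m p (μs s) χ) F (nhds 0)

def StrongClusterPtF (κ : X → X → ℝ≥0∞) (m p : ℕ) {ι : Type} (F : Filter ι)
    (μs : ι → (Fin (m + p) → Measure X)) (χ : Fin (m + p) → Measure X) : Prop :=
  ∀ ε : ℝ, 0 < ε → ∃ᶠ s in F, sdist2 κ m p (μs s) χ < ε

/-- A minimizing net: a net in `E⁰(A,b,g)` whose energies tend to `‖E(A,b,g)‖²`
(the class `𝕄(A,b,g)`). -/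
def IsMinNet (κ : X → X → ℝ≥0∞) (A : Condenser X m p) (b : Fin (m + p) → ℝ≥0∞)
    (g : X → ℝ) (n : Net (Fin (m + p) → Measure X)) : Prop :=
  (∀ s, inE0b κ A b g (n.toFun s)) ∧
    Tendsto (fun s => ENNReal.ofReal (assocNormSq κ m p (n.toFun s))) n.atTopF
      (nhds (minE κ A b g))

/-- `M(A,b,g)`: `A`-vague cluster points (within `𝔐(Ā)`) of minimizing nets. -/
def Mset (κ : X → X → ℝ≥0∞) (A : Condenser X m p) (b : Fin (m + p) → ℝ≥0∞)
    (g : X → ℝ) : Set (Fin (m + p) → Measure X) :=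
  {χ | Assoc A.cl χ ∧ ∃ n : Net (Fin (m + p) → Measure X),
    IsMinNet κ A b g n ∧ AVagueClusterPtF n.atTopF n.toFun χ}

/-- `M'(A,b,g)`: strong cluster points (within `E(Ā)`) of minimizing nets. -/
def M'set (κ : X → X → ℝ≥0∞) (A : Condenser X m p) (b : Fin (m + p) → ℝ≥0∞)
    (g : X → ℝ) : Set (Fin (m + p) → Measure X) :=
  {χ | inEA κ A.cl χ ∧ ∃ n : Net (Fin (m + p) → Measure X),
    IsMinNet κ A b g n ∧ StrongClusterPtF κ m p n.atTopF n.toFun χ}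

/-- `M'_E(A,b,g)`: the equivalence class in `E` of `Rχ`, `χ ∈ M'(A,b,g)`. -/
def M'E (κ : X → X → ℝ≥0∞) (A : Condenser X m p) (b : Fin (m + p) → ℝ≥0∞)
    (g : X → ℝ) : Set (Measure X × Measure X) :=
  {P | inE κ P ∧ ∃ χ ∈ M'set κ A b g, dist2 κ P (Rpair m p χ) = 0}

/-- Fuglede's consistency property (C): every strong Cauchy net in `E⁺` converges
strongly to each of its vague cluster points. -/
def Consistent (κ : X → X → ℝ≥0∞) : Prop :=
  ∀ n : Net (Measure X),
    (∀ s, IsRadon (n.toFun s) ∧ mutualE κ (n.toFun s) (n.toFun s) < ⊤) →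
    (∀ ε : ℝ, 0 < ε → ∃ s₀, ∀ s, n.leRel s₀ s → ∀ t, n.leRel s₀ t →
      dist2 κ (n.toFun s, 0) (n.toFun t, 0) < ε) →
    ∀ ν₀ : Measure X, @MapClusterPt (Measure X) (vagueTop X) n.ι ν₀ n.atTopF n.toFun →
      Tendsto (fun s => dist2 κ (n.toFun s, 0) (ν₀, 0)) n.atTopF (nhds 0)

/-- A perfect kernel: consistent and strictly positive definite. -/
def PerfectKernel (κ : X → X → ℝ≥0∞) : Prop :=
  Consistent κ ∧ StrictlyPositiveDefinite κ

/-- The constants `c_i(ν)` in the definition of the class `Γ̂(A,a,g)`: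
`α_i a_i κ(x,ν) ≥ c_i g(x)` n.e. in `A_i` for all `i`, and `∑ c_i ≥ 1`. -/
def ConstFor (κ : X → X → ℝ≥0∞) (A : Condenser X m p) (a : Fin (m + p) → ℝ) (g : X → ℝ)
    (ν : Measure X × Measure X) (c : Fin (m + p) → ℝ) : Prop :=
  (∀ i, NearlyEverywhereOn κ
    (fun x => ((c i * g x : ℝ) : EReal) ≤ ((sgn m i * a i : ℝ) : EReal) * pot κ ν x)
    (A.plate i)) ∧
  1 ≤ ∑ i, c i

/-- Same as `ConstFor`, but with `∑ c_i = 1` (the class `Γ̂*`). -/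
def ConstForEq (κ : X → X → ℝ≥0∞) (A : Condenser X m p) (a : Fin (m + p) → ℝ) (g : X → ℝ)
    (ν : Measure X × Measure X) (c : Fin (m + p) → ℝ) : Prop :=
  (∀ i, NearlyEverywhereOn κ
    (fun x => ((c i * g x : ℝ) : EReal) ≤ ((sgn m i * a i : ℝ) : EReal) * pot κ ν x)
    (A.plate i)) ∧
  (∑ i, c i) = 1

/-- The class `Γ̂(A,a,g)`. -/
def Gammahat (κ : X → X → ℝ≥0∞) (A : Condenser X m p) (a : Fin (m + p) → ℝ)
    (g : X → ℝ) : Set (Measure X × Measure X) :=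
  {ν | inE κ ν ∧ ∃ c, ConstFor κ A a g ν c}

/-- The class `Γ̂*(A,a,g)`. -/
def GammahatStar (κ : X → X → ℝ≥0∞) (A : Condenser X m p) (a : Fin (m + p) → ℝ)
    (g : X → ℝ) : Set (Measure X × Measure X) :=
  {ν | inE κ ν ∧ ∃ c, ConstForEq κ A a g ν c}

/-- `‖Γ̂(A,a,g)‖²`. -/
def GammahatInf (κ : X → X → ℝ≥0∞) (A : Condenser X m p) (a : Fin (m + p) → ℝ)
    (g : X → ℝ) : ℝ≥0∞ :=
  ⨅ (ν : Measure X × Measure X) (_ : ν ∈ Gammahat κ A a g), ENNReal.ofReal (normSq κ ν)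

/-- `Ĝ(A,a,g)`: minimizers in the `Γ̂(A,a,g)`-problem. -/
def Ghat (κ : X → X → ℝ≥0∞) (A : Condenser X m p) (a : Fin (m + p) → ℝ)
    (g : X → ℝ) : Set (Measure X × Measure X) :=
  {ν | ν ∈ Gammahat κ A a g ∧ ∀ ν' ∈ Gammahat κ A a g, normSq κ ν ≤ normSq κ ν'}

/-- The class `Γ(A,a,g)` of associated measures. -/
def GammaSet (κ : X → X → ℝ≥0∞) (A : Condenser X m p) (a : Fin (m + p) → ℝ)
    (g : X → ℝ) : Set (Fin (m + p) → Measure X) :=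
  {μ | inEA κ A.cl μ ∧ ∃ c, ConstFor κ A a g (Rpair m p μ) c}

/-- `G(A,a,g)`: minimizers in the `Γ(A,a,g)`-problem. -/
def Gset (κ : X → X → ℝ≥0∞) (A : Condenser X m p) (a : Fin (m + p) → ℝ)
    (g : X → ℝ) : Set (Fin (m + p) → Measure X) :=
  {μ | μ ∈ GammaSet κ A a g ∧
    ∀ μ' ∈ GammaSet κ A a g, assocNormSq κ m p μ ≤ assocNormSq κ m p μ'}

/-- The interior capacitary constants of `A`. -/
def IsCapConst (κ : X → X → ℝ≥0∞) (A : Condenser X m p) (a : Fin (m + p) → ℝ)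
    (g : X → ℝ) (C : Fin (m + p) → ℝ) : Prop :=
  ∃ ω, ω ∈ Ghat κ A a g ∧ ConstFor κ A a g ω C

/-- The family of compact condensers `K ≺ A`. -/
def CompactSub (A : Condenser X m p) : Type :=
  {K : Condenser X m p // (∀ i, IsCompact (K.plate i)) ∧ ∀ i, K.plate i ⊆ A.plate i}

instance (A : Condenser X m p) : Preorder (CompactSub A) where
  le K L := ∀ i, K.1.plate i ⊆ L.1.plate i
  le_refl K i := subset_rfl
  le_trans K L M h h' i := (h i).trans (h' i)

/-- A minimizer of the energy over `E(A,b,g)` (the class `S(A,b,g)`). -/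
def IsMinimizer (κ : X → X → ℝ≥0∞) (A : Condenser X m p) (b : Fin (m + p) → ℝ≥0∞)
    (g : X → ℝ) (lam : Fin (m + p) → Measure X) : Prop :=
  inEAb κ A b g lam ∧ ∀ μ, inEAb κ A b g μ → assocNormSq κ m p lam ≤ assocNormSq κ m p μ

/-- The interior capacitary distributions `D(A,a,g)` associated with `A`:
simultaneous `A`-vague and strong limits of nets of minimizers
`λ_{K_s} ∈ S(K_s, a·cap(K_s,a,g), g)` along subnets `(K_s)` of the increasing family
of all compact condensers `K ≺ A`. -/
def Dset (κ : X → X → ℝ≥0∞) (A : Condenser X m p) (a : Fin (m + p) → ℝ)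
    (g : X → ℝ) : Set (Fin (m + p) → Measure X) :=
  {γ | inEA κ A.cl γ ∧
    ∃ (n : Net (CompactSub A)) (lam : n.ι → (Fin (m + p) → Measure X)),
      Tendsto n.toFun n.atTopF Filter.atTop ∧
      (∀ t, IsMinimizer κ (n.toFun t).1 (aCap κ (n.toFun t).1 a g) g (lam t)) ∧
      AVagueTendstoF n.atTopF lam γ ∧ StrongTendstoF κ m p n.atTopF lam γ}

/-- The standing assumptions of Section 4.6. -/
def StandingAssumptions (κ : X → X → ℝ≥0∞) (A : Condenser X m p)
    (a : Fin (m + p) → ℝ) (g : X → ℝ) : Prop :=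
  IsKernel κ ∧ PositiveDefinite κ ∧ Consistent κ ∧
  Continuous g ∧ (∀ x, 0 < g x) ∧ (∀ i, 0 < a i) ∧
  0 < cap κ A a g ∧
  (p = 0 ∨ ((∃ c : ℝ, 0 < c ∧ ∀ x ∈ A.unionAll, c ≤ g x) ∧
    ∃ M : ℝ≥0∞, M ≠ ⊤ ∧ ∀ x ∈ A.posUnion, ∀ y ∈ A.negUnion, κ x y ≤ M))

/-- The class of `ν ∈ E` with `α_i a_i κ(x,ν) ≥ C_i g(x)` n.e. in `A_i` for all `i`. -/
def PotIneqClass (κ : X → X → ℝ≥0∞) (A : Condenser X m p) (a : Fin (m + p) → ℝ)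
    (g : X → ℝ) (C : Fin (m + p) → ℝ) : Set (Measure X × Measure X) :=
  {ν | inE κ ν ∧ ∀ i, NearlyEverywhereOn κ
    (fun x => ((C i * g x : ℝ) : EReal) ≤ ((sgn m i * a i : ℝ) : EReal) * pot κ ν x)
    (A.plate i)}

/-- The class of `μ ∈ E(Ā)` with `α_i a_i κ(x,μ) ≥ C_i g(x)` n.e. in `A_i` for all `i`. -/
def PotIneqClassA (κ : X → X → ℝ≥0∞) (A : Condenser X m p) (a : Fin (m + p) → ℝ)
    (g : X → ℝ) (C : Fin (m + p) → ℝ) : Set (Fin (m + p) → Measure X) :=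
  {μ | inEA κ A.cl μ ∧ ∀ i, NearlyEverywhereOn κ
    (fun x => ((C i * g x : ℝ) : EReal) ≤ ((sgn m i * a i : ℝ) : EReal) * pot κ (Rpair m p μ) x)
    (A.plate i)}

/-- The quotient `α_i a_i κ(x,ν) / g(x)`, as an extended real. -/
def potQuot (κ : X → X → ℝ≥0∞) (m : ℕ) {k : ℕ} (a : Fin k → ℝ) (g : X → ℝ)
    (ν : Measure X × Measure X) (i : Fin k) (x : X) : EReal :=
  (((g x)⁻¹ : ℝ) : EReal) * (((sgn m i * a i : ℝ) : EReal) * pot κ ν x)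

end Zorii

/-!
A measure `μ ∈ E(A,a,g)` is approximated by elements of `E⁰(A,a,g)` obtained by restricting each
coordinate `μⁱ` to a compact subset `K ⊆ Aᵢ` and rescaling it back to the `g`-mass `aᵢ`. Since
`μⁱ` is inner regular and σ-finite (its `g`-mass is finite and `g > 0`), there is an increasing
sequence of such compacts carrying all of `μⁱ`. Along it the rescaling factors tend to `1`, so the
diagonal energies `κ(ν^±, ν^±)` stay below `(max factor)² κ(μ^±, μ^±)`, while the cross energies
only grow under rescaling and increase to `κ(μ⁺, μ⁻)` by monotone convergence. Monotone
convergence needs the potentials of the restricted measures to be measurable; they are in fact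
lower semicontinuous, as potentials of inner regular measures with respect to a lower
semicontinuous kernel.
-/

theorem ENNReal.exists_lt_one_lt_mul {c p : ℝ≥0∞} (h : c < p) : ∃ θ < 1, c < θ * p := by
  have hlim : Tendsto (fun θ : ℝ≥0∞ => θ * p) (𝓝[<] 1) (𝓝 p) := by
    simpa using ENNReal.Tendsto.mul_const (tendsto_nhdsWithin_of_tendsto_nhds tendsto_id)
      (Or.inl one_ne_zero)
  exact ((hlim.eventually (lt_mem_nhds h)).and self_mem_nhdsWithin).exists.imp
    fun θ h => ⟨h.2, h.1⟩

namespace MeasureTheory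

theorem sigmaFinite_of_lintegral_ne_top {α : Type*} [MeasurableSpace α] {μ : Measure α}
    {w : α → ℝ≥0∞} (hw : Measurable w) (hw0 : ∀ x, w x ≠ 0) (hwT : ∀ x, w x ≠ ∞)
    (h : ∫⁻ x, w x ∂μ ≠ ∞) : SigmaFinite μ := by
  have := isFiniteMeasure_withDensity h
  rw [← withDensity_inv_same (μ := μ) hw (ae_of_all _ hw0) (ae_of_all _ hwT)]
  exact SigmaFinite.withDensity_of_ne_top' (by simpa using hw0)

theorem SimpleFunc.exists_isCompact_fiber_lt_sum {X : Type*} [TopologicalSpace X]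
    [MeasurableSpace X] {ν : Measure X} [ν.InnerRegular] (φ : SimpleFunc X ℝ≥0) {c : ℝ≥0∞}
    (hc : c < (φ.map ((↑) : ℝ≥0 → ℝ≥0∞)).lintegral ν) :
    ∃ C : ℝ≥0 → Set X, (∀ a, IsCompact (C a) ∧ C a ⊆ φ ⁻¹' {a}) ∧
      c < ∑ a ∈ φ.range, (a : ℝ≥0∞) * ν (C a) := by
  classical
  let ι := {C : ℝ≥0 → Set X // ∀ a, IsCompact (C a) ∧ C a ⊆ φ ⁻¹' {a}}
  have hfiber : ∀ a, ν (φ ⁻¹' {a}) = ⨆ C : ι, ν (C.1 a) := by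
    refine fun a => le_antisymm ?_ (iSup_le fun C => measure_mono (C.2 a).2)
    rw [(φ.measurableSet_fiber a).measure_eq_iSup_isCompact]
    refine iSup₂_le fun K hK => iSup_le fun hKc => le_iSup_of_le
      ⟨Function.update (fun _ => ∅) a K, fun b => ?_⟩ (by simp)
    rcases eq_or_ne b a with rfl | hb
    · simpa using ⟨hKc, hK⟩
    · simp [Function.update_of_ne hb]
  have hdir : ∀ C C' : ι, ∃ C'' : ι, ∀ a : ℝ≥0, (a : ℝ≥0∞) * ν (C.1 a) ≤ a * ν (C''.1 a) ∧
      (a : ℝ≥0∞) * ν (C'.1 a) ≤ a * ν (C''.1 a) := fun C C' =>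
    ⟨⟨fun a => C.1 a ∪ C'.1 a, fun a => ⟨(C.2 a).1.union (C'.2 a).1,
      union_subset (C.2 a).2 (C'.2 a).2⟩⟩, fun a => ⟨by gcongr; exact subset_union_left,
      by gcongr; exact subset_union_right⟩⟩
  rw [SimpleFunc.map_lintegral] at hc
  simp_rw [hfiber, ENNReal.mul_iSup] at hc
  rw [ENNReal.finsetSum_iSup hdir] at hc
  obtain ⟨C, hC⟩ := lt_iSup_iff.1 hc
  exact ⟨C.1, C.2, hC⟩

theorem LowerSemicontinuous.eventually_forall_lt_of_isCompact {X Y β : Type*}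
    [TopologicalSpace X] [TopologicalSpace Y] [LinearOrder β] {f : X → Y → β}
    (hf : LowerSemicontinuous (Function.uncurry f)) {C : Set Y} (hC : IsCompact C) {t : β}
    {x₀ : X} (h : ∀ y ∈ C, t < f x₀ y) : ∀ᶠ x in 𝓝 x₀, ∀ y ∈ C, t < f x y := by
  have hsub : {x₀} ×ˢ C ⊆ Function.uncurry f ⁻¹' Ioi t := by
    rintro ⟨x, y⟩ ⟨hx, hy⟩
    rw [show x = x₀ from hx]
    exact h y hy
  obtain ⟨U, V, hU, -, hxU, hCV, hUV⟩ :=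
    generalized_tube_lemma isCompact_singleton hC (hf.isOpen_preimage t) hsub
  filter_upwards [hU.mem_nhds (hxU rfl)] with x hx y hy
  exact hUV (mk_mem_prod hx (hCV hy))

theorem lowerSemicontinuous_lintegral_of_uncurry {X Y : Type*} [TopologicalSpace X]
    [TopologicalSpace Y] [MeasurableSpace Y] [OpensMeasurableSpace Y] {f : X → Y → ℝ≥0∞}
    (hf : LowerSemicontinuous (Function.uncurry f)) (ν : Measure Y) [ν.InnerRegular] :
    LowerSemicontinuous fun x => ∫⁻ y, f x y ∂ν := by
  have hsec : ∀ x, Measurable (f x) := fun x =>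
    (hf.comp (Continuous.prodMk_right x)).measurable
  intro x₀ c hc
  obtain ⟨θ, hθ, hcθ⟩ := ENNReal.exists_lt_one_lt_mul hc
  rw [← lintegral_const_mul θ (hsec x₀), lintegral_eq_nnreal] at hcθ
  obtain ⟨φ, hcφ⟩ := lt_iSup_iff.1 hcθ
  obtain ⟨hφ, hcφ⟩ := lt_iSup_iff.1 hcφ
  obtain ⟨C, hC, hcC⟩ := φ.exists_isCompact_fiber_lt_sum hcφ
  have hnear : ∀ a ∈ φ.range, ∀ᶠ x in 𝓝 x₀, ∀ y ∈ C a, (a : ℝ≥0∞) ≤ f x y := by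
    intro a _
    rcases eq_or_ne a 0 with rfl | ha
    · simp
    refine (hf.eventually_forall_lt_of_isCompact (hC a).1 fun y hy => ?_).mono
      fun x hx y hy => (hx y hy).le
    -- the factor `θ < 1` makes `φ ≤ θ f x₀` strict where `φ ≠ 0`
    have hay : (a : ℝ≥0∞) ≤ θ * f x₀ y := ((hC a).2 hy) ▸ hφ y
    rcases eq_or_ne (f x₀ y) ⊤ with hT | hT
    · exact hT ▸ coe_lt_top
    have h0 : f x₀ y ≠ 0 := fun h0 => ha (by simpa [h0] using hay)
    calc (a : ℝ≥0∞) ≤ θ * f x₀ y := hay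
      _ < 1 * f x₀ y := ENNReal.mul_lt_mul_left h0 hT hθ
      _ = f x₀ y := one_mul _
  filter_upwards [(eventually_all_finset _).2 hnear] with x hx
  calc c < ∑ a ∈ φ.range, (a : ℝ≥0∞) * ν (C a) := hcC
    _ ≤ ∑ a ∈ φ.range, ∫⁻ y in φ ⁻¹' {a}, f x y ∂ν := Finset.sum_le_sum fun a ha => by
        rw [← setLIntegral_const]
        exact (setLIntegral_mono (hsec x) (hx a ha)).trans
          (lintegral_mono' (Measure.restrict_mono (hC a).2 le_rfl) le_rfl)
    _ = ∫⁻ y in ⋃ a ∈ φ.range, φ ⁻¹' {a}, f x y ∂ν :=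
        (lintegral_biUnion_finset (pairwiseDisjoint_fiber _ _)
          (fun a _ => φ.measurableSet_fiber a) _).symm
    _ ≤ ∫⁻ y, f x y ∂ν := setLIntegral_le_lintegral _ _

namespace Measure

variable {X : Type*} [MeasurableSpace X]

theorem exists_monotone_isCompact_compl_iUnion_null [TopologicalSpace X] [T2Space X]
    [OpensMeasurableSpace X] (μ : Measure X) [μ.InnerRegular] [SigmaFinite μ] {A : Set X}
    (hA : μ Aᶜ = 0) :
    ∃ K : ℕ → Set X, Monotone K ∧ (∀ n, IsCompact (K n)) ∧ (∀ n, K n ⊆ A) ∧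
      μ (⋃ n, K n)ᶜ = 0 := by
  obtain ⟨B, hAB, hBm, hB⟩ := exists_measurable_superset_of_null hA
  let F : ℕ → Set X := fun k => Bᶜ ∩ spanningSets μ k
  have hFm : ∀ k, MeasurableSet (F k) := fun k =>
    hBm.compl.inter (measurableSet_spanningSets μ k)
  have hFfin : ∀ k, μ (F k) ≠ ∞ := fun k =>
    ((measure_mono inter_subset_right).trans_lt (measure_spanningSets_lt_top μ k)).ne
  choose L hLF hLc hL using fun k j : ℕ =>
    (hFm k).exists_isCompact_sdiff_lt (hFfin k) (ENNReal.inv_ne_zero.2 (natCast_ne_top j))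
  refine ⟨fun n => ⋃ k ≤ n, ⋃ j ≤ n, L k j, fun n n' h => ?_, fun n => ?_, fun n => ?_, ?_⟩
  · exact iUnion₂_mono' fun k hk => ⟨k, hk.trans h, iUnion₂_mono' fun j hj =>
      ⟨j, hj.trans h, subset_rfl⟩⟩
  · exact (finite_Iic n).isCompact_biUnion fun k _ =>
      (finite_Iic n).isCompact_biUnion fun j _ => hLc k j
  · exact iUnion₂_subset fun k _ => iUnion₂_subset fun j _ =>
      (hLF k j).trans (inter_subset_left.trans (compl_subset_comm.1 hAB))
  have hsub : (⋃ n, ⋃ k ≤ n, ⋃ j ≤ n, L k j)ᶜ ⊆ B ∪ ⋃ k, ⋂ j, F k \ L k j := by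
    intro x hx
    by_cases hxB : x ∈ B
    · exact Or.inl hxB
    obtain ⟨k, hk⟩ := mem_iUnion.1 ((iUnion_spanningSets μ).symm ▸ mem_univ x)
    refine Or.inr (mem_iUnion.2 ⟨k, mem_iInter.2 fun j => ⟨⟨hxB, hk⟩, fun hxL => hx ?_⟩⟩)
    exact mem_iUnion.2 ⟨max k j, mem_iUnion₂.2 ⟨k, le_max_left _ _,
      mem_iUnion₂.2 ⟨j, le_max_right _ _, hxL⟩⟩⟩
  refine measure_mono_null hsub (measure_union_null hB (measure_iUnion_null fun k => ?_))
  exact nonpos_iff_eq_zero.1 (ge_of_tendsto' ENNReal.tendsto_inv_nat_nhds_zero fun j =>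
    (measure_mono (iInter_subset _ j)).trans (hL k j).le)

structure IncreasesTo (τ : ℕ → Measure X) (μ : Measure X) : Prop where
  mono : Monotone τ
  lintegral_eq_iSup (f : X → ℝ≥0∞) : ∫⁻ x, f x ∂μ = ⨆ n, ∫⁻ x, f x ∂τ n

-- no measurability of `f` is needed, see `setLIntegral_iUnion_of_directed`
theorem increasesTo_restrict {μ : Measure X} {K : ℕ → Set X} (hK : Monotone K)
    (hμK : μ (⋃ n, K n)ᶜ = 0) : IncreasesTo (fun n => μ.restrict (K n)) μ :=
  ⟨fun _ _ h => Measure.restrict_mono (hK h) le_rfl, fun f => by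
    rw [← setLIntegral_iUnion_of_directed f hK.directed_le,
      Measure.restrict_eq_self_of_ae_mem (s := ⋃ n, K n) (mem_ae_iff.2 hμK)]⟩

namespace IncreasesTo

variable {τ : ℕ → Measure X} {μ : Measure X}

theorem monotone_lintegral (h : IncreasesTo τ μ) (f : X → ℝ≥0∞) :
    Monotone fun n => ∫⁻ x, f x ∂τ n :=
  fun _ _ hn => lintegral_mono' (h.mono hn) le_rfl

theorem tendsto_lintegral (h : IncreasesTo τ μ) (f : X → ℝ≥0∞) :
    Tendsto (fun n => ∫⁻ x, f x ∂τ n) atTop (𝓝 (∫⁻ x, f x ∂μ)) :=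
  h.lintegral_eq_iSup f ▸ tendsto_atTop_iSup (h.monotone_lintegral f)

theorem finset_sum {ι : Type*} {s : Finset ι} {τ : ι → ℕ → Measure X} {μ : ι → Measure X}
    (h : ∀ i, IncreasesTo (τ i) (μ i)) :
    IncreasesTo (fun n => ∑ i ∈ s, τ i n) (∑ i ∈ s, μ i) :=
  ⟨fun _ _ hn => Finset.sum_le_sum fun i _ => (h i).mono hn, fun f => by
    simp_rw [lintegral_finsetSum_measure, (h _).lintegral_eq_iSup f]
    exact ENNReal.finsetSum_iSup_of_monotone fun i => (h i).monotone_lintegral f⟩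

end IncreasesTo

end Measure

end MeasureTheory

namespace Zorii

open Measure

section Energy

variable {X : Type} [MeasurableSpace X] {κ : X → X → ℝ≥0∞}

theorem measurable_potOf [TopologicalSpace X] [OpensMeasurableSpace X] (hκ : IsKernel κ)
    (ν : Measure X) [ν.InnerRegular] : Measurable (potOf κ ν) :=
  (lowerSemicontinuous_lintegral_of_uncurry hκ ν).measurable

theorem mutualE_mono {σ σ' ρ ρ' : Measure X} (hσ : σ ≤ σ') (hρ : ρ ≤ ρ') :
    mutualE κ σ ρ ≤ mutualE κ σ' ρ' :=
  lintegral_mono' hσ fun _ => lintegral_mono' hρ le_rfl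

theorem mutualE_le_of_le_smul {σ σ' ρ ρ' : Measure X} {C : ℝ≥0∞} (hC : C ≠ ∞)
    (hσ : σ' ≤ C • σ) (hρ : ρ' ≤ C • ρ) : mutualE κ σ' ρ' ≤ C * C * mutualE κ σ ρ := by
  refine (mutualE_mono hσ hρ).trans_eq ?_
  simp only [mutualE, lintegral_smul_measure, smul_eq_mul]
  rw [lintegral_const_mul' _ _ hC, mul_assoc]

theorem mutualE_eq_iSup_of_increasesTo {σ ρ : ℕ → Measure X} {σ' ρ' : Measure X}
    (hσ : IncreasesTo σ σ') (hρ : IncreasesTo ρ ρ') (hρm : ∀ n, Measurable (potOf κ (ρ n))) :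
    mutualE κ σ' ρ' = ⨆ n, mutualE κ (σ n) (ρ n) := by
  have hpot : potOf κ ρ' = fun x => ⨆ k, potOf κ (ρ k) x :=
    funext fun x => hρ.lintegral_eq_iSup _
  have hmono : Monotone fun k => potOf κ (ρ k) := fun _ _ hk x => hρ.monotone_lintegral _ hk
  calc mutualE κ σ' ρ' = ⨆ n, ∫⁻ x, potOf κ ρ' x ∂σ n := hσ.lintegral_eq_iSup _
    _ = ⨆ n, ⨆ k, mutualE κ (σ n) (ρ k) := by
        simp only [hpot, lintegral_iSup hρm hmono]; rfl
    _ = ⨆ n, mutualE κ (σ n) (ρ n) :=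
        le_antisymm (iSup₂_le fun n k => le_iSup_of_le (max n k)
            (mutualE_mono (hσ.mono (le_max_left n k)) (hρ.mono (le_max_right n k))))
          (iSup_le fun n => le_iSup₂_of_le n n le_rfl)

theorem tendsto_mutualE_of_increasesTo {σ ρ : ℕ → Measure X} {σ' ρ' : Measure X}
    (hσ : IncreasesTo σ σ') (hρ : IncreasesTo ρ ρ') (hρm : ∀ n, Measurable (potOf κ (ρ n))) :
    Tendsto (fun n => mutualE κ (σ n) (ρ n)) atTop (𝓝 (mutualE κ σ' ρ')) :=
  mutualE_eq_iSup_of_increasesTo hσ hρ hρm ▸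
    tendsto_atTop_iSup fun _ _ hn => mutualE_mono (hσ.mono hn) (hρ.mono hn)

def diagE (κ : X → X → ℝ≥0∞) (P : Measure X × Measure X) : ℝ≥0∞ :=
  mutualE κ P.1 P.1 + mutualE κ P.2 P.2

def crossE (κ : X → X → ℝ≥0∞) (P : Measure X × Measure X) : ℝ≥0∞ :=
  mutualE κ P.1 P.2 + mutualE κ P.2 P.1

theorem normSq_eq_diagE_sub_crossE (P : Measure X × Measure X) :
    normSq κ P = (diagE κ P).toReal - (crossE κ P).toReal := rfl

theorem crossE_mono {P Q : Measure X × Measure X} (h : P ≤ Q) : crossE κ P ≤ crossE κ Q :=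
  add_le_add (mutualE_mono h.1 h.2) (mutualE_mono h.2 h.1)

theorem diagE_le_of_le_smul {P Q : Measure X × Measure X} {C : ℝ≥0∞} (hC : C ≠ ∞)
    (h : P ≤ C • Q) : diagE κ P ≤ C * C * diagE κ Q := by
  rw [diagE, diagE, mul_add]
  exact add_le_add (mutualE_le_of_le_smul hC h.1 h.1) (mutualE_le_of_le_smul hC h.2 h.2)

theorem FinEnergy.of_le_smul {P Q : Measure X × Measure X} {C : ℝ≥0∞} (hQ : FinEnergy κ Q)
    (hC : C ≠ ∞) (h : P ≤ C • Q) : FinEnergy κ P := by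
  have hCC : C * C ≠ ∞ := ENNReal.mul_ne_top hC hC
  exact ⟨(mutualE_le_of_le_smul hC h.1 h.1).trans_lt (ENNReal.mul_lt_top hCC.lt_top hQ.1),
    (mutualE_le_of_le_smul hC h.2 h.2).trans_lt (ENNReal.mul_lt_top hCC.lt_top hQ.2.1),
    (mutualE_le_of_le_smul hC h.1 h.2).trans_lt (ENNReal.mul_lt_top hCC.lt_top hQ.2.2.1),
    (mutualE_le_of_le_smul hC h.2 h.1).trans_lt (ENNReal.mul_lt_top hCC.lt_top hQ.2.2.2)⟩

theorem normSq_le {P P' : Measure X × Measure X} {d : ℝ≥0∞} (hP : FinEnergy κ P)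
    (hd : diagE κ P ≤ d) (hdT : d ≠ ∞) (hP' : crossE κ P' ≤ crossE κ P) :
    normSq κ P ≤ d.toReal - (crossE κ P').toReal := by
  have hcross : crossE κ P ≠ ∞ := ENNReal.add_ne_top.2 ⟨hP.2.2.1.ne, hP.2.2.2.ne⟩
  exact normSq_eq_diagE_sub_crossE P ▸
    sub_le_sub (ENNReal.toReal_mono hdT hd) (ENNReal.toReal_mono hcross hP')

end Energy

section Rpair

variable {X : Type} [MeasurableSpace X] {m p : ℕ}

theorem Rpair_mono {μ ν : Fin (m + p) → Measure X} (h : ∀ i, μ i ≤ ν i) :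
    Rpair m p μ ≤ Rpair m p ν :=
  ⟨Finset.sum_le_sum fun i _ => h i, Finset.sum_le_sum fun i _ => h i⟩

theorem Rpair_smul (C : ℝ≥0∞) (μ : Fin (m + p) → Measure X) :
    Rpair m p (fun i => C • μ i) = C • Rpair m p μ := by
  simp only [Rpair, Rpos, Rneg, Finset.smul_sum, Prod.smul_mk]

theorem increasesTo_Rpair {τ : ℕ → Fin (m + p) → Measure X} {μ : Fin (m + p) → Measure X}
    (h : ∀ i, IncreasesTo (fun n => τ n i) (μ i)) :
    IncreasesTo (fun n => (Rpair m p (τ n)).1) (Rpair m p μ).1 ∧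
      IncreasesTo (fun n => (Rpair m p (τ n)).2) (Rpair m p μ).2 :=
  ⟨IncreasesTo.finset_sum (s := Finset.univ.filter fun i : Fin (m + p) => (i : ℕ) < m) h,
    IncreasesTo.finset_sum (s := Finset.univ.filter fun i : Fin (m + p) => ¬ (i : ℕ) < m) h⟩

variable [TopologicalSpace X]

theorem IsRadon.restrict_of_isCompact {μ : Measure X} (hμ : IsRadon μ) {K : Set X}
    (hK : IsCompact K) : IsRadon (μ.restrict K) := by
  have := hμ.1
  have := hμ.2
  have : IsFiniteMeasure (μ.restrict K) := isFiniteMeasure_restrict.2 hK.measure_lt_top.ne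
  exact ⟨inferInstance, inferInstance⟩

theorem IsRadon.smul {μ : Measure X} (hμ : IsRadon μ) {c : ℝ≥0∞} (hc : c ≠ ∞) :
    IsRadon (c • μ) := by
  have := hμ.1
  have := hμ.2
  exact ⟨inferInstance, IsFiniteMeasureOnCompacts.smul _ hc⟩

theorem innerRegular_Rpair {μ : Fin (m + p) → Measure X} (h : ∀ i, IsRadon (μ i)) :
    (Rpair m p μ).1.InnerRegular ∧ (Rpair m p μ).2.InnerRegular := by
  have := fun i => (h i).1
  exact ⟨by unfold Rpair Rpos; infer_instance, by unfold Rpair Rneg; infer_instance⟩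

end Rpair

section NormalizedRestrict

variable {X : Type} [MeasurableSpace X] {m p : ℕ} {b : Fin (m + p) → ℝ≥0∞} {g : X → ℝ}
  {μ : Fin (m + p) → Measure X} {K : Fin (m + p) → Set X}

def normalizedRestrict (g : X → ℝ) (b : Fin (m + p) → ℝ≥0∞) (μ : Fin (m + p) → Measure X)
    (K : Fin (m + p) → Set X) : Fin (m + p) → Measure X :=
  fun i => (b i / gInt g ((μ i).restrict (K i))) • (μ i).restrict (K i)

theorem sup_div_gInt_restrict_ne_top (hbT : ∀ i, b i ≠ ∞)
    (hs : ∀ i, gInt g ((μ i).restrict (K i)) ≠ 0) :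
    (Finset.univ.sup fun i => b i / gInt g ((μ i).restrict (K i))) ≠ ∞ :=
  ((Finset.sup_lt_iff bot_lt_top).2 fun i _ => (ENNReal.div_ne_top (hbT i) (hs i)).lt_top).ne

theorem Rpair_normalizedRestrict_le_smul :
    Rpair m p (normalizedRestrict g b μ K) ≤
      (Finset.univ.sup fun i => b i / gInt g ((μ i).restrict (K i))) • Rpair m p μ := by
  rw [← Rpair_smul]
  refine Rpair_mono fun i => ?_
  dsimp only [normalizedRestrict]
  gcongr
  · exact Finset.le_sup (f := fun i => b i / gInt g ((μ i).restrict (K i))) (Finset.mem_univ i)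
  · exact restrict_le_self

variable [TopologicalSpace X] {κ : X → X → ℝ≥0∞} {A : Condenser X m p}

theorem gInt_restrict_le (hμ : inEAb κ A b g μ) (i : Fin (m + p)) :
    gInt g ((μ i).restrict (K i)) ≤ b i :=
  hμ.2 i ▸ lintegral_mono' restrict_le_self le_rfl

theorem restrict_le_normalizedRestrict (hμ : inEAb κ A b g μ) (hbT : ∀ i, b i ≠ ∞)
    (hs : ∀ i, gInt g ((μ i).restrict (K i)) ≠ 0) (i : Fin (m + p)) :
    (μ i).restrict (K i) ≤ normalizedRestrict g b μ K i :=
  calc (μ i).restrict (K i) = (1 : ℝ≥0∞) • (μ i).restrict (K i) := (one_smul _ _).symm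
    _ ≤ normalizedRestrict g b μ K i := by
        dsimp only [normalizedRestrict]
        gcongr
        rw [ENNReal.le_div_iff_mul_le (Or.inl (hs i)) (Or.inr (hbT i)), one_mul]
        exact gInt_restrict_le hμ i

theorem inE0b_normalizedRestrict [T2Space X] [OpensMeasurableSpace X] (hμ : inEAb κ A b g μ)
    (hbT : ∀ i, b i ≠ ∞) (hs : ∀ i, gInt g ((μ i).restrict (K i)) ≠ 0)
    (hK : ∀ i, IsCompact (K i)) (hKA : ∀ i, K i ⊆ A.plate i) :
    inE0b κ A b g (normalizedRestrict g b μ K) := by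
  have hnull : ∀ i {S : Set X}, Disjoint S (K i) → normalizedRestrict g b μ K i S = 0 :=
    fun i S hS => by
      simp [normalizedRestrict, Measure.restrict_apply' (hK i).measurableSet, hS.inter_eq]
  refine ⟨⟨⟨fun i => ⟨((hμ.1.1 i).1.restrict_of_isCompact (hK i)).smul
    (ENNReal.div_ne_top (hbT i) (hs i)), hnull i (disjoint_compl_left.mono_right (hKA i))⟩,
    hμ.1.2.of_le_smul (sup_div_gInt_restrict_ne_top hbT hs)
      Rpair_normalizedRestrict_le_smul⟩, fun i => ?_⟩,
    fun i => ⟨K i, hK i, hKA i, hnull i disjoint_compl_left⟩⟩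
  rw [gInt, normalizedRestrict, lintegral_smul_measure, smul_eq_mul]
  exact ENNReal.div_mul_cancel (hs i) ((gInt_restrict_le hμ i).trans_lt (hbT i).lt_top).ne

theorem assocNormSq_normalizedRestrict_le (hμ : inEAb κ A b g μ) (hbT : ∀ i, b i ≠ ∞)
    (hs : ∀ i, gInt g ((μ i).restrict (K i)) ≠ 0) :
    assocNormSq κ m p (normalizedRestrict g b μ K) ≤
      ((Finset.univ.sup fun i => b i / gInt g ((μ i).restrict (K i))) *
          (Finset.univ.sup fun i => b i / gInt g ((μ i).restrict (K i))) *
          diagE κ (Rpair m p μ)).toReal -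
        (crossE κ (Rpair m p fun i => (μ i).restrict (K i))).toReal := by
  have hC := sup_div_gInt_restrict_ne_top hbT hs
  have hD : diagE κ (Rpair m p μ) ≠ ∞ := ENNReal.add_ne_top.2 ⟨hμ.1.2.1.ne, hμ.1.2.2.1.ne⟩
  exact normSq_le (hμ.1.2.of_le_smul hC Rpair_normalizedRestrict_le_smul)
    (diagE_le_of_le_smul hC Rpair_normalizedRestrict_le_smul)
    (ENNReal.mul_ne_top (ENNReal.mul_ne_top hC hC) hD)
    (crossE_mono (Rpair_mono (restrict_le_normalizedRestrict hμ hbT hs)))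

end NormalizedRestrict

section Approximation

variable {X : Type} [TopologicalSpace X] [MeasurableSpace X] [OpensMeasurableSpace X] {m p : ℕ}
  {κ : X → X → ℝ≥0∞} {A : Condenser X m p}
  {b : Fin (m + p) → ℝ≥0∞} {g : X → ℝ} {μ : Fin (m + p) → Measure X}

theorem exists_compact_exhaustion_of_inEAb [T2Space X] (hμ : inEAb κ A b g μ) (hgc : Continuous g)
    (hgpos : ∀ x, 0 < g x) (hbT : ∀ i, b i ≠ ∞) (i : Fin (m + p)) :
    ∃ K : ℕ → Set X, Monotone K ∧ (∀ n, IsCompact (K n)) ∧ (∀ n, K n ⊆ A.plate i) ∧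
      μ i (⋃ n, K n)ᶜ = 0 := by
  have := (hμ.1.1 i).1.1
  have : SigmaFinite (μ i) := sigmaFinite_of_lintegral_ne_top hgc.measurable.ennreal_ofReal
    (fun x => (ENNReal.ofReal_pos.2 (hgpos x)).ne') (fun _ => ENNReal.ofReal_ne_top)
    ((hμ.2 i).trans_ne (hbT i))
  exact (μ i).exists_monotone_isCompact_compl_iUnion_null (hμ.1.1 i).2

theorem tendsto_crossE_restrict (hκ : IsKernel κ) (hμ : ∀ i, IsRadon (μ i))
    {K : Fin (m + p) → ℕ → Set X} (hKmono : ∀ i, Monotone (K i))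
    (hKc : ∀ i n, IsCompact (K i n)) (hKnull : ∀ i, μ i (⋃ n, K i n)ᶜ = 0) :
    Tendsto (fun n => crossE κ (Rpair m p fun i => (μ i).restrict (K i n))) atTop
      (𝓝 (crossE κ (Rpair m p μ))) := by
  obtain ⟨hP, hQ⟩ := increasesTo_Rpair fun i => increasesTo_restrict (hKmono i) (hKnull i)
  have hpot : ∀ n, Measurable (potOf κ (Rpair m p fun i => (μ i).restrict (K i n)).1) ∧
      Measurable (potOf κ (Rpair m p fun i => (μ i).restrict (K i n)).2) := fun n => by
    obtain ⟨_, _⟩ := innerRegular_Rpair fun i => (hμ i).restrict_of_isCompact (hKc i n)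
    exact ⟨measurable_potOf hκ _, measurable_potOf hκ _⟩
  exact (tendsto_mutualE_of_increasesTo hP hQ fun n => (hpot n).2).add
    (tendsto_mutualE_of_increasesTo hQ hP fun n => (hpot n).1)

theorem minE0_le_of_inEAb [T2Space X] (hκ : IsKernel κ) (hgc : Continuous g) (hgpos : ∀ x, 0 < g x)
    {a : Fin (m + p) → ℝ} (ha : ∀ i, 0 < a i) (hμ : inEAb κ A (aVec a) g μ) :
    minE0 κ A (aVec a) g ≤ ENNReal.ofReal (assocNormSq κ m p μ) := by
  have hb0 : ∀ i, aVec a i ≠ 0 := fun i => (ENNReal.ofReal_pos.2 (ha i)).ne'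
  have hbT : ∀ i, aVec a i ≠ ∞ := fun i => ENNReal.ofReal_ne_top
  choose K hKmono hKc hKA hKnull using exists_compact_exhaustion_of_inEAb hμ hgc hgpos hbT
  have hmass : ∀ i, Tendsto (fun n => gInt g ((μ i).restrict (K i n))) atTop (𝓝 (aVec a i)) :=
    fun i => hμ.2 i ▸ (increasesTo_restrict (hKmono i) (hKnull i)).tendsto_lintegral _
  set C := fun n => Finset.univ.sup fun i => aVec a i / gInt g ((μ i).restrict (K i n))
  -- `L = 1` unless there are no plates, a supremum over `∅` being `0`
  set L : ℝ≥0∞ := Finset.univ.sup fun _ : Fin (m + p) => 1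
  have hL : L ≤ 1 := Finset.sup_le fun _ _ => le_rfl
  have hLT : L ≠ ∞ := ne_top_of_le_ne_top one_ne_top hL
  have hC : Tendsto C atTop (𝓝 L) := Tendsto.finset_sup_nhds_apply fun i _ => by
    simpa [ENNReal.div_self (hb0 i) (hbT i)] using
      ENNReal.Tendsto.div tendsto_const_nhds (Or.inl (hb0 i)) (hmass i) (Or.inl (hbT i))
  set D := diagE κ (Rpair m p μ)
  have hD : D ≠ ∞ := ENNReal.add_ne_top.2 ⟨hμ.1.2.1.ne, hμ.1.2.2.1.ne⟩
  have hX : crossE κ (Rpair m p μ) ≠ ∞ := ENNReal.add_ne_top.2 ⟨hμ.1.2.2.2.1.ne, hμ.1.2.2.2.2.ne⟩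
  have hu : Tendsto (fun n => (C n * C n * D).toReal -
      (crossE κ (Rpair m p fun i => (μ i).restrict (K i n))).toReal) atTop
      (𝓝 ((L * L * D).toReal - (crossE κ (Rpair m p μ)).toReal)) :=
    ((ENNReal.tendsto_toReal (ENNReal.mul_ne_top (ENNReal.mul_ne_top hLT hLT) hD)).comp
      (ENNReal.Tendsto.mul_const (ENNReal.Tendsto.mul hC (Or.inr hLT) hC (Or.inr hLT))
        (Or.inr hD))).sub
      ((ENNReal.tendsto_toReal hX).comp
        (tendsto_crossE_restrict hκ (fun i => (hμ.1.1 i).1) hKmono hKc hKnull))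
  have hs : ∀ᶠ n in atTop, ∀ i, gInt g ((μ i).restrict (K i n)) ≠ 0 :=
    eventually_all.2 fun i => (hmass i).eventually_ne (hb0 i)
  calc minE0 κ A (aVec a) g
      ≤ ENNReal.ofReal ((L * L * D).toReal - (crossE κ (Rpair m p μ)).toReal) :=
        ge_of_tendsto ((ENNReal.continuous_ofReal.tendsto _).comp hu) <| hs.mono fun n hn =>
          (iInf₂_le _ (inE0b_normalizedRestrict hμ hbT hn (fun i => hKc i n)
            fun i => hKA i n)).trans
              (ENNReal.ofReal_le_ofReal (assocNormSq_normalizedRestrict_le hμ hbT hn))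
    _ ≤ ENNReal.ofReal (assocNormSq κ m p μ) := by
        rw [assocNormSq, normSq_eq_diagE_sub_crossE]
        refine ENNReal.ofReal_le_ofReal (sub_le_sub_right (ENNReal.toReal_mono hD ?_) _)
        calc L * L * D ≤ 1 * 1 * D := by gcongr
          _ = D := by rw [one_mul, one_mul]

end Approximation

end Zorii

open Zorii in
theorem statement2_general
    {X : Type} [TopologicalSpace X] [T2Space X]
    [MeasurableSpace X] [BorelSpace X]
    (κ : X → X → ℝ≥0∞) (hker : IsKernel κ)
    (m p : ℕ) (A : Condenser X m p)
    (g : X → ℝ) (hgc : Continuous g) (hgpos : ∀ x, 0 < g x)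
    (a : Fin (m + p) → ℝ) (ha : ∀ i, 0 < a i) :
    minE κ A (aVec a) g = minE0 κ A (aVec a) g :=
  le_antisymm (le_iInf₂ fun ν hν => iInf₂_le ν hν.1)
    (le_iInf₂ fun _ hμ => minE0_le_of_inEAb hker hgc hgpos ha hμ)

open Zorii in
/-- Corollary 1: `‖E(A,a,g)‖² = ‖E⁰(A,a,g)‖²`. -/
theorem statement2
    {X : Type} [TopologicalSpace X] [T2Space X] [LocallyCompactSpace X]
    [MeasurableSpace X] [BorelSpace X]
    (κ : X → X → ℝ≥0∞) (hker : IsKernel κ) (hpd : PositiveDefinite κ)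
    (m p : ℕ) (hm : 0 < m) (A : Condenser X m p)
    (g : X → ℝ) (hgc : Continuous g) (hgpos : ∀ x, 0 < g x)
    (a : Fin (m + p) → ℝ) (ha : ∀ i, 0 < a i) :
    minE κ A (aVec a) g = minE0 κ A (aVec a) g :=
  statement2_general κ hker m p A g hgc hgpos a ha
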